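/- arXiv:1612.06604 — 4 statements merged into one kernel-verified Lean document; each statement's English description precedes it below -/
import Mathlib

section
/- Let R > 0, let δ ≥ 0 be real, and let z_p, z_s be complex numbers with Im(z_p) > 0, Im(z_s) > 0, Re(z_p) ≤ −1 and Re(z_s) ≤ −1. Define the 3×3 complex matrix A = [[R, 0, 0],[0, −1 − z_s, √δ],[0, −√δ, z_p]] and Λ = δ − z_p(1 + z_s). Then Λ ≠ 0, A is invertible, and A⁻¹ = [[1/R, 0, 0],[0, z_p/Λ, −√δ/Λ],[0, √δ/Λ, (−1 − z_s)/Λ]]. -/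
/-! The matrix is block diagonal with blocks `R` and a `2 × 2` block of determinant
`(-1 - z_s) z_p + δ = Λ`, so the claimed inverse is the block-wise adjugate formula. That `Λ ≠ 0`
is read off its imaginary part `-Re(z_p) Im(z_s) - Im(z_p) (1 + Re(z_s))`, which is positive:
the first term is positive and the second nonnegative. -/

theorem Matrix.fin_three_block_mul_adjugate_div {K : Type*} [Field K] {r p q s t : K}
    (hr : r ≠ 0) (hD : p * t - q * s ≠ 0) :
    !![r, 0, 0; 0, p, q; 0, s, t] *
        !![r⁻¹, 0, 0;
           0, t / (p * t - q * s), -q / (p * t - q * s);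
           0, -s / (p * t - q * s), p / (p * t - q * s)] = 1 := by
  set D := p * t - q * s with hD_def
  rw [Matrix.mul_fin_three, Matrix.one_fin_three]
  ext i j
  fin_cases i <;> fin_cases j <;>
    simp only [Fin.isValue, Fin.zero_eta, Fin.mk_one, Fin.reduceFinMk, Matrix.of_apply,
      Matrix.cons_val', Matrix.cons_val, Matrix.cons_val_zero, Matrix.cons_val_one,
      Matrix.cons_val_fin_one, mul_zero, zero_mul, add_zero, zero_add] <;>
    field_simp <;> linear_combination hD_def

theorem Complex.im_ofReal_sub_mul_one_add_pos (δ : ℝ) {zp zs : ℂ} (hip : 0 ≤ zp.im)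
    (his : 0 < zs.im) (hrp : zp.re < 0) (hrs : zs.re ≤ -1) :
    0 < ((δ : ℂ) - zp * (1 + zs)).im := by
  have him : ((δ : ℂ) - zp * (1 + zs)).im = -zp.re * zs.im - zp.im * (1 + zs.re) := by
    simp only [Complex.sub_im, Complex.ofReal_im, Complex.mul_im, Complex.add_re,
      Complex.add_im, Complex.one_re, Complex.one_im]
    ring
  rw [him]
  nlinarith

/-- Abstract form of Lemma 3.1: for `R > 0`, `δ ≥ 0`, and `z_p, z_s` with positive
imaginary parts and real parts `≤ −1`, the matrix
`A = [[R, 0, 0],[0, −1 − z_s, √δ],[0, −√δ, z_p]]` has `Λ = δ − z_p(1 + z_s) ≠ 0`,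
is invertible, and its inverse is
`[[1/R, 0, 0],[0, z_p/Λ, −√δ/Λ],[0, √δ/Λ, (−1 − z_s)/Λ]]`. -/
theorem stmt_3 (R δ : ℝ) (hR : 0 < R) (hδ : 0 ≤ δ)
    (zp zs : ℂ) (hip : 0 < zp.im) (his : 0 < zs.im)
    (hrp : zp.re ≤ -1) (hrs : zs.re ≤ -1) :
    let A : Matrix (Fin 3) (Fin 3) ℂ :=
      !![(R : ℂ), 0, 0;
         0, -1 - zs, (Real.sqrt δ : ℂ);
         0, -(Real.sqrt δ : ℂ), zp]
    let Λ : ℂ := (δ : ℂ) - zp * (1 + zs)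
    Λ ≠ 0 ∧ IsUnit A ∧
      A⁻¹ = !![((R : ℂ))⁻¹, 0, 0;
               0, zp / Λ, -(Real.sqrt δ : ℂ) / Λ;
               0, (Real.sqrt δ : ℂ) / Λ, (-1 - zs) / Λ] := by
  intro A Λ
  have hΛ : Λ ≠ 0 := fun h ↦ by
    simpa [Λ, h] using Complex.im_ofReal_sub_mul_one_add_pos δ hip.le his (by linarith) hrs
  have hdet : (-1 - zs) * zp - (Real.sqrt δ : ℂ) * -(Real.sqrt δ : ℂ) = Λ := by
    have hsq : (Real.sqrt δ : ℂ) * (Real.sqrt δ : ℂ) = δ := by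
      rw [← Complex.ofReal_mul, Real.mul_self_sqrt hδ]
    linear_combination hsq
  have hmul := Matrix.fin_three_block_mul_adjugate_div (Complex.ofReal_ne_zero.mpr hR.ne')
    (by rwa [hdet])
  rw [hdet, neg_neg] at hmul
  exact ⟨hΛ, Matrix.isUnit_iff_isUnit_det A |>.mpr (Matrix.isUnit_det_of_right_inverse hmul),
    Matrix.inv_eq_right_inv hmul⟩
end

section
/- Let λ, μ, λ̃ be real numbers with μ > 0 and λ + μ > 0, and assume (λ − μ)(λ + 2μ)/(λ + 3μ) < λ̃ < λ + 2μ. Set b = (λ − λ̃)(λ + 3μ) + 2μ². Then the real symmetric 3×3 matrix [[μ(λ + 3μ), 0, 0],[0, 2μ(λ + 2μ), −b],[0, −b, 2μ(λ + 2μ)]] is positive definite. -/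
/-!
The matrix is a positive diagonal entry `μ(λ+3μ)` next to a `2×2` block `[[c, -b], [-b, c]]`
with `c = 2μ(λ+2μ)`, whose eigenvalues are `c ∓ b`. Both are positive exactly under (2.7):
`c - b = (λ+3μ)λ̃ - (λ-μ)(λ+2μ)` and `c + b = (λ+3μ)(λ+2μ-λ̃)`.
-/

open Matrix

lemma weighted_sum_sq_pos {p q r u v w : ℝ} (hp : 0 < p) (hq : 0 < q) (hr : 0 < r)
    (h : u ≠ 0 ∨ v ≠ 0 ∨ w ≠ 0) : 0 < p * u ^ 2 + q * v ^ 2 + r * w ^ 2 := by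
  have hu := mul_nonneg hp.le (sq_nonneg u)
  have hv := mul_nonneg hq.le (sq_nonneg v)
  have hw := mul_nonneg hr.le (sq_nonneg w)
  rcases h with h | h | h
  · linarith [mul_pos hp (sq_pos_of_ne_zero h)]
  · linarith [mul_pos hq (sq_pos_of_ne_zero h)]
  · linarith [mul_pos hr (sq_pos_of_ne_zero h)]

lemma posDef_of_pos_of_abs_lt {a b c : ℝ} (ha : 0 < a) (hbc : |b| < c) :
    (!![a, 0, 0; 0, c, -b; 0, -b, c] : Matrix (Fin 3) (Fin 3) ℝ).PosDef := by
  have hminus : 0 < (c - b) / 2 := by linarith [le_abs_self b]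
  have hplus : 0 < (c + b) / 2 := by linarith [neg_abs_le b]
  rw [Matrix.posDef_iff_dotProduct_mulVec]
  refine ⟨?_, fun x hx => ?_⟩
  · ext i j
    fin_cases i <;> fin_cases j <;> simp
  · have hform : star x ⬝ᵥ (!![a, 0, 0; 0, c, -b; 0, -b, c] *ᵥ x) =
        a * x 0 ^ 2 + (c - b) / 2 * (x 1 + x 2) ^ 2 + (c + b) / 2 * (x 1 - x 2) ^ 2 := by
      simp [dotProduct, Fin.sum_univ_three]
      ring
    have hcoord : x 0 ≠ 0 ∨ x 1 + x 2 ≠ 0 ∨ x 1 - x 2 ≠ 0 := by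
      by_contra! h
      apply hx
      ext i
      fin_cases i <;> simp <;> linarith
    rw [hform]
    exact weighted_sum_sq_pos ha hminus hplus hcoord

lemma abs_lt_of_lame_bounds {lam mu lamt : ℝ} (h3 : 0 < lam + 3 * mu)
    (h1 : (lam - mu) * (lam + 2 * mu) / (lam + 3 * mu) < lamt) (h2 : lamt < lam + 2 * mu) :
    |(lam - lamt) * (lam + 3 * mu) + 2 * mu ^ 2| < 2 * mu * (lam + 2 * mu) := by
  rw [div_lt_iff₀ h3] at h1
  rw [abs_lt]
  constructor <;> nlinarith

/-- Under the paper's assumption (2.7), with `b = (λ−λ̃)(λ+3μ)+2μ²`, the real symmetric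
matrix `[[μ(λ+3μ), 0, 0],[0, 2μ(λ+2μ), −b],[0, −b, 2μ(λ+2μ)]]` is positive definite. -/
theorem stmt_7 (lam mu lamt : ℝ) (hmu : 0 < mu) (hlm : 0 < lam + mu)
    (h1 : (lam - mu) * (lam + 2 * mu) / (lam + 3 * mu) < lamt)
    (h2 : lamt < lam + 2 * mu)
    (b : ℝ) (hb : b = (lam - lamt) * (lam + 3 * mu) + 2 * mu ^ 2) :
    (!![mu * (lam + 3 * mu), 0, 0;
        0, 2 * mu * (lam + 2 * mu), -b;
        0, -b, 2 * mu * (lam + 2 * mu)] : Matrix (Fin 3) (Fin 3) ℝ).PosDef := by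
  have h3 : 0 < lam + 3 * mu := by linarith
  subst hb
  exact posDef_of_pos_of_abs_lt (mul_pos hmu h3) (abs_lt_of_lame_bounds h3 h1 h2)
end

section
/- Let n be an integer, let t_p, t_s, E, λ, μ, λ̃, μ̃ be real numbers and γ_p, γ_s, β_p, β_s complex numbers satisfying: t_p² β_p = n² − t_p² − t_p γ_p, t_s² β_s = n² − t_s² − t_s γ_s, λ̃ + μ̃ = λ + μ, μ t_s² = E, and (λ + 2μ) t_p² = E. Define A = [[t_p γ_p, i n],[i n, −t_s γ_s]] and B = [[(μ+μ̃) t_p² β_p − λ̃ t_p², i(μ+μ̃) n (t_s γ_s − 1)],[i(μ+μ̃) n (t_p γ_p − 1), −(μ+μ̃) t_s² β_s − μ̃ t_s²]], and set M = A* B (A* the conjugate transpose). Then the skew-Hermitian part (M − M*)/(2i) equals the real diagonal matrix diag((λ + 2μ) t_p³ Im(γ_p), μ t_s³ Im(γ_s)); in particular the (1,2) entry of M is the complex conjugate of the (2,1) entry. -/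
/-- 2D Rellich-type matrix identity: with `M = A* B`, the skew-Hermitian part
`(M − M*)/(2i)` equals `diag((λ+2μ) t_p³ Im γ_p, μ t_s³ Im γ_s)`; in particular
the (1,2) entry of `M` is the complex conjugate of the (2,1) entry. -/
theorem stmt_9 (n : ℤ) (tp ts E lam mu lamt muT : ℝ) (γp γs βp βs : ℂ)
    (hβp : (tp : ℂ) ^ 2 * βp = (n : ℂ) ^ 2 - (tp : ℂ) ^ 2 - (tp : ℂ) * γp)
    (hβs : (ts : ℂ) ^ 2 * βs = (n : ℂ) ^ 2 - (ts : ℂ) ^ 2 - (ts : ℂ) * γs)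
    (hlm : lamt + muT = lam + mu)
    (hE1 : mu * ts ^ 2 = E) (hE2 : (lam + 2 * mu) * tp ^ 2 = E) :
    let A : Matrix (Fin 2) (Fin 2) ℂ :=
      !![(tp : ℂ) * γp, Complex.I * (n : ℂ);
         Complex.I * (n : ℂ), -((ts : ℂ) * γs)]
    let B : Matrix (Fin 2) (Fin 2) ℂ :=
      !![((mu : ℂ) + (muT : ℂ)) * (tp : ℂ) ^ 2 * βp - (lamt : ℂ) * (tp : ℂ) ^ 2,
         Complex.I * ((mu : ℂ) + (muT : ℂ)) * (n : ℂ) * ((ts : ℂ) * γs - 1);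
         Complex.I * ((mu : ℂ) + (muT : ℂ)) * (n : ℂ) * ((tp : ℂ) * γp - 1),
         -(((mu : ℂ) + (muT : ℂ)) * (ts : ℂ) ^ 2 * βs) - (muT : ℂ) * (ts : ℂ) ^ 2]
    let M : Matrix (Fin 2) (Fin 2) ℂ := A.conjTranspose * B
    (2 * Complex.I)⁻¹ • (M - M.conjTranspose) =
      !![(((lam + 2 * mu) * tp ^ 3 * γp.im : ℝ) : ℂ), 0;
         0, ((mu * ts ^ 3 * γs.im : ℝ) : ℂ)] ∧
    M 0 1 = starRingEnd ℂ (M 1 0) := by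
  have hβp' : (tp : ℂ) ^ 2 * (starRingEnd ℂ) βp
      = (n : ℂ) ^ 2 - (tp : ℂ) ^ 2 - (tp : ℂ) * (starRingEnd ℂ) γp := by
    have := congrArg (starRingEnd ℂ) hβp
    simpa [map_sub, map_mul, map_pow, Complex.conj_ofReal] using this
  have hβs' : (ts : ℂ) ^ 2 * (starRingEnd ℂ) βs
      = (n : ℂ) ^ 2 - (ts : ℂ) ^ 2 - (ts : ℂ) * (starRingEnd ℂ) γs := by
    have := congrArg (starRingEnd ℂ) hβs
    simpa [map_sub, map_mul, map_pow, Complex.conj_ofReal] using this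
  have hlm' : (lamt : ℂ) + muT = lam + mu := by exact_mod_cast hlm
  have hE1' : (mu : ℂ) * ts ^ 2 = E := by exact_mod_cast hE1
  have hE2' : ((lam : ℂ) + 2 * mu) * tp ^ 2 = E := by exact_mod_cast hE2
  have hsp : γp - (starRingEnd ℂ) γp = 2 * (γp.im : ℂ) * Complex.I := by
    have := Complex.sub_conj γp; push_cast at this; exact this
  have hss : γs - (starRingEnd ℂ) γs = 2 * (γs.im : ℂ) * Complex.I := by
    have := Complex.sub_conj γs; push_cast at this; exact this
  have hne : (2 * Complex.I) ≠ 0 := by simp [Complex.I_ne_zero]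
  intro A B M
  have h01 : M 0 1 = starRingEnd ℂ (M 1 0) := by
    simp [M, A, B, Matrix.mul_apply, Fin.sum_univ_two, Complex.conj_ofReal]
    push_cast
    linear_combination (Complex.I * (n:ℂ) * ((mu:ℂ)+muT)) * hβs
      - (Complex.I * (n:ℂ) * ((mu:ℂ)+muT)) * hβp'
      + (Complex.I * (n:ℂ) * (tp:ℂ)^2) * hlm'
      + Complex.I * (n:ℂ) * hE2' - Complex.I * (n:ℂ) * hE1'
  refine ⟨?_, h01⟩
  ext i j
  fin_cases i <;> fin_cases j <;>
    simp [M, A, B, Matrix.mul_apply, Fin.sum_univ_two, Complex.conj_ofReal, -smul_eq_mul]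
  · push_cast
    linear_combination (-(Complex.I/2)) * ((((mu:ℂ)+muT) * tp * (starRingEnd ℂ γp)) * hβp
      - (((mu:ℂ)+muT) * tp * γp) * hβp'
      + ((tp:ℂ)^3 * (γp - starRingEnd ℂ γp)) * hlm'
      + (((lam:ℂ) + 2*mu) * tp^3) * hsp)
      - (((lam:ℂ)+2*mu) * tp^3 * (γp.im:ℂ)) * Complex.I_sq
      + (Complex.I * ((tp:ℂ) * (n:ℂ)^2 * ((mu:ℂ)+muT) * (γp - starRingEnd ℂ γp) / 2)) * Complex.I_sq
  · push_cast
    linear_combination (Complex.I * (n:ℂ) * ((mu:ℂ)+muT)) * hβs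
      - (Complex.I * (n:ℂ) * ((mu:ℂ)+muT)) * hβp'
      + (Complex.I * (n:ℂ) * (tp:ℂ)^2) * hlm'
      + Complex.I * (n:ℂ) * hE2' - Complex.I * (n:ℂ) * hE1'
  · push_cast
    linear_combination (Complex.I * (n:ℂ) * ((mu:ℂ)+muT)) * hβs'
      - (Complex.I * (n:ℂ) * ((mu:ℂ)+muT)) * hβp
      + (Complex.I * (n:ℂ) * (tp:ℂ)^2) * hlm'
      + Complex.I * (n:ℂ) * hE2' - Complex.I * (n:ℂ) * hE1'
  · push_cast
    linear_combination (-(Complex.I/2)) * ((((mu:ℂ)+muT) * ts * (starRingEnd ℂ γs)) * hβs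
      - (((mu:ℂ)+muT) * ts * γs) * hβs'
      + ((mu:ℂ) * ts^3) * hss)
      - ((mu:ℂ) * ts^3 * (γs.im:ℂ)) * Complex.I_sq
      + (Complex.I * ((ts:ℂ) * (n:ℂ)^2 * ((mu:ℂ)+muT) * (γs - starRingEnd ℂ γs) / 2)) * Complex.I_sq
end

section
/- Let n be a natural number, δ = n(n+1), and let t_p, t_s, R, E, λ, μ, λ̃, μ̃ be real numbers and γ_p, γ_s, β_p, β_s complex numbers satisfying: t_p² β_p = δ − t_p² − 2 t_p γ_p, t_s² β_s = δ − t_s² − 2 t_s γ_s, λ̃ + μ̃ = λ + μ, μ t_s² = E, and (λ + 2μ) t_p² = E. Define the 3×3 complex matrices A = [[R, 0, 0],[0, −1 − t_s γ_s, √δ],[0, −√δ, t_p γ_p]] and B = [[R(μ t_s γ_s − μ̃), 0, 0],[0, (μ+μ̃)(1 − t_s γ_s − t_s² β_s) − μ̃ t_s², √δ (μ+μ̃)(t_p γ_p − 1)],[0, √δ (μ+μ̃)(1 − t_s γ_s), (μ+μ̃) t_p² β_p − λ̃ t_p²]], and set M = A* B (A* the conjugate transpose). Then the skew-Hermitian part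 (M − M*)/(2i) equals the real diagonal matrix diag(μ R² t_s Im(γ_s), μ t_s³ Im(γ_s), (λ + 2μ) t_p³ Im(γ_p)); in particular the (2,3) entry of M is the complex conjugate of the (3,2) entry. -/
/-- 3D Rellich-type matrix identity: with `M = A* B`, the skew-Hermitian part
`(M − M*)/(2i)` equals `diag(μ R² t_s Im γ_s, μ t_s³ Im γ_s, (λ+2μ) t_p³ Im γ_p)`;
in particular the (2,3) entry of `M` is the complex conjugate of the (3,2) entry. -/
theorem stmt_11 (n : ℕ) (δ tp ts R E lam mu lamt muT : ℝ) (γp γs βp βs : ℂ)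
    (hδ : δ = n * (n + 1))
    (hβp : (tp : ℂ) ^ 2 * βp = (δ : ℂ) - (tp : ℂ) ^ 2 - 2 * (tp : ℂ) * γp)
    (hβs : (ts : ℂ) ^ 2 * βs = (δ : ℂ) - (ts : ℂ) ^ 2 - 2 * (ts : ℂ) * γs)
    (hlm : lamt + muT = lam + mu)
    (hE1 : mu * ts ^ 2 = E) (hE2 : (lam + 2 * mu) * tp ^ 2 = E) :
    let sδ : ℂ := (Real.sqrt δ : ℂ)
    let A : Matrix (Fin 3) (Fin 3) ℂ :=
      !![(R : ℂ), 0, 0;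
         0, -1 - (ts : ℂ) * γs, sδ;
         0, -sδ, (tp : ℂ) * γp]
    let B : Matrix (Fin 3) (Fin 3) ℂ :=
      !![(R : ℂ) * ((mu : ℂ) * (ts : ℂ) * γs - (muT : ℂ)), 0, 0;
         0, ((mu : ℂ) + (muT : ℂ)) * (1 - (ts : ℂ) * γs - (ts : ℂ) ^ 2 * βs) -
              (muT : ℂ) * (ts : ℂ) ^ 2,
            sδ * ((mu : ℂ) + (muT : ℂ)) * ((tp : ℂ) * γp - 1);
         0, sδ * ((mu : ℂ) + (muT : ℂ)) * (1 - (ts : ℂ) * γs),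
            ((mu : ℂ) + (muT : ℂ)) * (tp : ℂ) ^ 2 * βp - (lamt : ℂ) * (tp : ℂ) ^ 2]
    let M : Matrix (Fin 3) (Fin 3) ℂ := A.conjTranspose * B
    (2 * Complex.I)⁻¹ • (M - M.conjTranspose) =
      !![((mu * R ^ 2 * ts * γs.im : ℝ) : ℂ), 0, 0;
         0, ((mu * ts ^ 3 * γs.im : ℝ) : ℂ), 0;
         0, 0, (((lam + 2 * mu) * tp ^ 3 * γp.im : ℝ) : ℂ)] ∧
    M 1 2 = starRingEnd ℂ (M 2 1) := by
  intro sδ A B M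
  have hδ0 : (0:ℝ) ≤ δ := by rw [hδ]; positivity
  have hsδ : (Real.sqrt δ : ℂ) * (Real.sqrt δ : ℂ) = (δ : ℂ) := by
    rw [← Complex.ofReal_mul, Real.mul_self_sqrt hδ0]
  have hβs' : (ts : ℂ) ^ 2 * (starRingEnd ℂ βs) =
      (δ : ℂ) - (ts : ℂ) ^ 2 - 2 * (ts : ℂ) * (starRingEnd ℂ γs) := by
    have h := congrArg (starRingEnd ℂ) hβs
    simp only [map_mul, map_sub, map_pow, map_ofNat, Complex.conj_ofReal] at h
    exact h
  have hβp' : (tp : ℂ) ^ 2 * (starRingEnd ℂ βp) =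
      (δ : ℂ) - (tp : ℂ) ^ 2 - 2 * (tp : ℂ) * (starRingEnd ℂ γp) := by
    have h := congrArg (starRingEnd ℂ) hβp
    simp only [map_mul, map_sub, map_pow, map_ofNat, Complex.conj_ofReal] at h
    exact h
  have hims : ((γs.im : ℝ) : ℂ) * (2 * Complex.I) = γs - starRingEnd ℂ γs := by
    rw [Complex.sub_conj]; push_cast; ring
  have himp : ((γp.im : ℝ) : ℂ) * (2 * Complex.I) = γp - starRingEnd ℂ γp := by
    rw [Complex.sub_conj]; push_cast; ring
  have hlm' : (lamt : ℂ) + (muT : ℂ) = (lam : ℂ) + (mu : ℂ) := by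
    exact_mod_cast hlm
  have hE : (mu : ℂ) * (ts:ℂ) ^ 2 = ((lam:ℂ) + 2 * (mu:ℂ)) * (tp:ℂ) ^ 2 := by
    have : mu * ts^2 = (lam + 2*mu) * tp^2 := by rw [hE1, hE2]
    exact_mod_cast this
  have hI2 : Complex.I * Complex.I = -1 := Complex.I_mul_I
  have hIinv : (2 * Complex.I)⁻¹ = -Complex.I / 2 := by
    rw [mul_inv, Complex.inv_I]; ring
  constructor
  · ext i j
    fin_cases i <;> fin_cases j <;>
      simp [M, A, B, sδ, Matrix.mul_apply, Fin.sum_univ_three, Matrix.conjTranspose_apply,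
        Matrix.vecHead, Matrix.vecTail, hIinv, Complex.conj_ofReal, Complex.ofReal_mul,
        Complex.ofReal_pow]
    · -- (0,0)
      linear_combination ((1/2:ℂ)*(ts:ℂ)*(R:ℂ)^2*(mu:ℂ)*Complex.I) * hims +
        ((-1:ℂ)*((γs.im : ℝ):ℂ)*(ts:ℂ)*(R:ℂ)^2*(mu:ℂ)) * hI2
    · -- (1,1)
      linear_combination
        ((-1/2:ℂ)*(mu:ℂ)*Complex.I + (-1/2:ℂ)*(muT:ℂ)*Complex.I +
          (-1/2:ℂ)*(starRingEnd ℂ γs)*(ts:ℂ)*(mu:ℂ)*Complex.I +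
          (-1/2:ℂ)*(starRingEnd ℂ γs)*(ts:ℂ)*(muT:ℂ)*Complex.I) * hβs +
        ((1/2:ℂ)*(mu:ℂ)*Complex.I + (1/2:ℂ)*(muT:ℂ)*Complex.I +
          (1/2:ℂ)*γs*(ts:ℂ)*(mu:ℂ)*Complex.I + (1/2:ℂ)*γs*(ts:ℂ)*(muT:ℂ)*Complex.I) * hβs' +
        ((1/2:ℂ)*(ts:ℂ)^3*(mu:ℂ)*Complex.I) * hims +
        ((-1/2:ℂ)*γs*(ts:ℂ)*(mu:ℂ)*Complex.I + (-1/2:ℂ)*γs*(ts:ℂ)*(muT:ℂ)*Complex.I +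
          (1/2:ℂ)*(starRingEnd ℂ γs)*(ts:ℂ)*(mu:ℂ)*Complex.I +
          (1/2:ℂ)*(starRingEnd ℂ γs)*(ts:ℂ)*(muT:ℂ)*Complex.I) * hsδ +
        ((-1:ℂ)*((γs.im : ℝ):ℂ)*(ts:ℂ)^3*(mu:ℂ)) * hI2
    · -- (1,2)
      linear_combination ((Real.sqrt δ : ℂ)*(mu:ℂ) + (Real.sqrt δ : ℂ)*(muT:ℂ)) * hβs' +
        ((-1:ℂ)*(Real.sqrt δ : ℂ)*(mu:ℂ) + (-1:ℂ)*(Real.sqrt δ : ℂ)*(muT:ℂ)) * hβp +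
        ((Real.sqrt δ : ℂ)*(tp:ℂ)^2) * hlm' + ((-1:ℂ)*(Real.sqrt δ : ℂ)) * hE
    · -- (2,1)
      linear_combination ((-1:ℂ)*(Real.sqrt δ : ℂ)*(mu:ℂ) + (-1:ℂ)*(Real.sqrt δ : ℂ)*(muT:ℂ)) * hβs +
        ((Real.sqrt δ : ℂ)*(mu:ℂ) + (Real.sqrt δ : ℂ)*(muT:ℂ)) * hβp' +
        ((-1:ℂ)*(Real.sqrt δ : ℂ)*(tp:ℂ)^2) * hlm' + ((Real.sqrt δ : ℂ)) * hE
    · -- (2,2)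
      linear_combination
        ((-1/2:ℂ)*(starRingEnd ℂ γp)*(tp:ℂ)*(mu:ℂ)*Complex.I +
          (-1/2:ℂ)*(starRingEnd ℂ γp)*(tp:ℂ)*(muT:ℂ)*Complex.I) * hβp +
        ((1/2:ℂ)*γp*(tp:ℂ)*(mu:ℂ)*Complex.I + (1/2:ℂ)*γp*(tp:ℂ)*(muT:ℂ)*Complex.I) * hβp' +
        ((1/2:ℂ)*(tp:ℂ)^3*(lam:ℂ)*Complex.I + (tp:ℂ)^3*(mu:ℂ)*Complex.I) * himp +
        ((-1/2:ℂ)*γp*(tp:ℂ)*(mu:ℂ)*Complex.I + (-1/2:ℂ)*γp*(tp:ℂ)*(muT:ℂ)*Complex.I +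
          (1/2:ℂ)*(starRingEnd ℂ γp)*(tp:ℂ)*(mu:ℂ)*Complex.I +
          (1/2:ℂ)*(starRingEnd ℂ γp)*(tp:ℂ)*(muT:ℂ)*Complex.I) * hsδ +
        ((1/2:ℂ)*(starRingEnd ℂ γp)*(tp:ℂ)^3*Complex.I +
          (-1/2:ℂ)*γp*(tp:ℂ)^3*Complex.I) * hlm' +
        ((-1:ℂ)*((γp.im : ℝ):ℂ)*(tp:ℂ)^3*(lam:ℂ) +
          (-2:ℂ)*((γp.im : ℝ):ℂ)*(tp:ℂ)^3*(mu:ℂ)) * hI2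
  · simp [M, A, B, sδ, Matrix.mul_apply, Fin.sum_univ_three, Matrix.conjTranspose_apply,
      Matrix.vecHead, Matrix.vecTail, Complex.conj_ofReal]
    linear_combination ((Real.sqrt δ : ℂ)*(mu:ℂ) + (Real.sqrt δ : ℂ)*(muT:ℂ)) * hβs' +
      ((-1:ℂ)*(Real.sqrt δ : ℂ)*(mu:ℂ) + (-1:ℂ)*(Real.sqrt δ : ℂ)*(muT:ℂ)) * hβp +
      ((Real.sqrt δ : ℂ)*(tp:ℂ)^2) * hlm' + ((-1:ℂ)*(Real.sqrt δ : ℂ)) * hE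
end
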